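/- arXiv:1604.03999 — 6 statements merged into one kernel-verified Lean document; each statement's English description precedes it below -/
import Mathlib

section
/- Let M be a monoid, π₁, π₂ ∈ M, and Σ : M × M → M a function. Then (M, Σ, π₁, π₂) is a CP monoid (i.e., Σ is bijective and π₁Σ(a,b) = a, π₂Σ(a,b) = b for all a, b) if and only if the following four identities hold: (1) π₁Σ(a,b) = a for all a,b; (2) π₂Σ(a,b) = b for all a,b; (3) Σ(a,b)c = Σ(ac,bc) for all a,b,c; (4) Σ(π₁,π₂) = 1. -/
/-- A categorical quasiproduct structure on a monoid. -/
def IsCQP {M : Type*} [Monoid M] (Sg : M → M → M) (π₁ π₂ : M) : Prop :=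
  (∀ a b, π₁ * Sg a b = a) ∧ (∀ a b, π₂ * Sg a b = b) ∧
    (∀ a b c, Sg (a * c) (b * c) = Sg a b * c)

/-- A categorical product (CP) monoid structure: `Sg` is bijective and
`π₁ * Sg(a,b) = a`, `π₂ * Sg(a,b) = b`. -/
def IsCP {M : Type*} [Monoid M] (Sg : M → M → M) (π₁ π₂ : M) : Prop :=
  Function.Bijective (fun ab : M × M => Sg ab.1 ab.2) ∧
    (∀ a b, π₁ * Sg a b = a) ∧ (∀ a b, π₂ * Sg a b = b)

/-- `(M, Sg, π₁, π₂)` is a CP monoid iff the four identities hold. -/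
theorem isCP_iff {M : Type*} [Monoid M] (Sg : M → M → M) (π₁ π₂ : M) :
    IsCP Sg π₁ π₂ ↔
      (∀ a b, π₁ * Sg a b = a) ∧ (∀ a b, π₂ * Sg a b = b) ∧
        (∀ a b c, Sg a b * c = Sg (a * c) (b * c)) ∧ Sg π₁ π₂ = 1 := by
  constructor
  · rintro ⟨⟨hinj, hsurj⟩, h1, h2⟩
    have key : ∀ x : M, x = Sg (π₁ * x) (π₂ * x) := by
      intro x
      obtain ⟨⟨u, v⟩, huv⟩ := hsurj x
      simp only at huv
      subst huv
      rw [h1, h2]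
    refine ⟨h1, h2, fun a b c => ?_, ?_⟩
    · conv_lhs => rw [key (Sg a b * c)]
      rw [← mul_assoc, ← mul_assoc, h1, h2]
    · conv_lhs => rw [show π₁ = π₁ * 1 by rw [mul_one], show π₂ = π₂ * 1 by rw [mul_one]]
      exact (key 1).symm
  · rintro ⟨h1, h2, h3, h4⟩
    refine ⟨⟨?_, ?_⟩, h1, h2⟩
    · rintro ⟨a, b⟩ ⟨c, d⟩ h
      simp only at h
      have ha : a = c := by rw [← h1 a b, h, h1]
      have hb : b = d := by rw [← h2 a b, h, h2]
      simp [ha, hb]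
    · intro x
      refine ⟨(π₁ * x, π₂ * x), ?_⟩
      simp only
      rw [← h3, h4, one_mul]
end

section
/- Let (M, Σ, π₁, π₂) be a CQP monoid with more than one element. Then π₁ and π₂ generate a free submonoid of M with basis {π₁, π₂}: whenever π_{i₁}⋯π_{i_s} = π_{j₁}⋯π_{j_t} with each index in {1,2}, one has s = t and i_ℓ = j_ℓ for all ℓ. -/
/-- In a CQP monoid with more than one element, π₁ and π₂ form a basis of a free
submonoid: two words in π₁, π₂ are equal in `M` only if they are identical. -/
theorem cqp_pi_free {M : Type*} [Monoid M] (Sg : M → M → M) (π : Fin 2 → M)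
    (h : IsCQP Sg (π 0) (π 1)) (hM : ∃ x y : M, x ≠ y) :
    ∀ l l' : List (Fin 2), (l.map π).prod = (l'.map π).prod → l = l' := by
  obtain ⟨h1, h2, h3⟩ := h
  obtain ⟨x, y, hxy⟩ := hM
  set s := Sg 1 1 with hs
  have hps : ∀ i : Fin 2, π i * s = 1 := by
    intro i; fin_cases i
    · exact h1 1 1
    · exact h2 1 1
  have hpq : π 0 ≠ π 1 := by
    intro e
    apply hxy
    calc x = π 0 * Sg x y := (h1 x y).symm
    _ = π 1 * Sg x y := by rw [e]
    _ = y := h2 x y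
  -- right cancellation of each generator
  have hcancel : ∀ (i : Fin 2) (u v : M), u * π i = v * π i → u = v := by
    intro i u v e
    have e2 := congrArg (· * s) e
    simpa [mul_assoc, hps i] using e2
  -- no unit among products ending in a generator
  have hunit : ∀ (i : Fin 2) (v : M), v * π i = 1 → False := by
    intro i v e
    have hv : v = s := by
      calc v = v * (π i * s) := by rw [hps i, mul_one]
      _ = (v * π i) * s := by rw [mul_assoc]
      _ = s := by rw [e, one_mul]
    have hsi : s * π i = 1 := by rw [← hv]; exact e
    apply hpq
    calc π 0 = π 0 * (s * π i) := by rw [hsi, mul_one]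
    _ = (π 0 * s) * π i := by rw [mul_assoc]
    _ = π i := by rw [hps 0, one_mul]
    _ = (π 1 * s) * π i := by rw [hps 1, one_mul]
    _ = π 1 * (s * π i) := by rw [mul_assoc]
    _ = π 1 := by rw [hsi, mul_one]
  -- a word cannot act as a constant map by left multiplication
  have habs : ∀ l : List (Fin 2), (∀ a b : M, (l.map π).prod * a = (l.map π).prod * b)
      → False := by
    intro l
    induction l using List.reverseRecOn with
    | nil => intro h'; exact hxy (by simpa using h' x y)
    | append_singleton t i ih =>
      intro h'
      apply ih
      have key : ∀ a b : M, (t.map π).prod * (π i * Sg a b) = (t.map π).prod * π i := by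
        intro a b
        have := h' (Sg a b) 1
        simpa [List.map_append, List.prod_append, mul_assoc] using this
      intro a b
      have hi : i = 0 ∨ i = 1 := by omega
      rcases hi with rfl | rfl
      · have ea := key a 1; rw [h1 a 1] at ea
        have eb := key b 1; rw [h1 b 1] at eb
        rw [ea, eb]
      · have ea := key 1 a; rw [h2 1 a] at ea
        have eb := key 1 b; rw [h2 1 b] at eb
        rw [ea, eb]
  -- a word ending in π 0 equal to a word ending in π 1 forces constancy
  have hmix : ∀ (u v : M), u * π 0 = v * π 1 → (∀ a b : M, u * a = u * b) := by
    intro u v e a b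
    have ha : u * a = v * 1 := by
      calc u * a = u * (π 0 * Sg a 1) := by rw [h1 a 1]
      _ = (u * π 0) * Sg a 1 := by rw [mul_assoc]
      _ = (v * π 1) * Sg a 1 := by rw [e]
      _ = v * (π 1 * Sg a 1) := by rw [mul_assoc]
      _ = v * 1 := by rw [h2 a 1]
    have hb : u * b = v * 1 := by
      calc u * b = u * (π 0 * Sg b 1) := by rw [h1 b 1]
      _ = (u * π 0) * Sg b 1 := by rw [mul_assoc]
      _ = (v * π 1) * Sg b 1 := by rw [e]
      _ = v * (π 1 * Sg b 1) := by rw [mul_assoc]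
      _ = v * 1 := by rw [h2 b 1]
    rw [ha, hb]
  intro l
  induction l using List.reverseRecOn with
  | nil =>
    intro l' e
    rcases l'.eq_nil_or_concat with rfl | ⟨t', j, rfl⟩
    · rfl
    · exfalso
      apply hunit j ((t'.map π).prod)
      have : (1 : M) = (t'.map π).prod * π j := by
        simpa [List.concat_eq_append, List.map_append, List.prod_append] using e
      exact this.symm
  | append_singleton t i ih =>
    intro l' e
    rcases l'.eq_nil_or_concat with rfl | ⟨t', j, rfl⟩
    · exfalso
      apply hunit i ((t.map π).prod)
      simpa [List.map_append, List.prod_append] using e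
    · have e' : (t.map π).prod * π i = (t'.map π).prod * π j := by
        simpa [List.concat_eq_append, List.map_append, List.prod_append] using e
      by_cases hij : i = j
      · subst hij
        rw [List.concat_eq_append, ih t' (hcancel i _ _ e')]
      · exfalso
        have hi : i = 0 ∨ i = 1 := by omega
        have hj : j = 0 ∨ j = 1 := by omega
        rcases hi with rfl | rfl <;> rcases hj with rfl | rfl
        · exact hij rfl
        · exact habs t (hmix _ _ e')
        · exact habs t' (hmix _ _ e'.symm)
        · exact hij rfl
end

section
/- Let S be the monoid whose elements are the subsets of B containing 0, with multiplication XY = {xy : x ∈ X, y ∈ Y}, identity {0,1}, and define Σ(X,Y) = π₁*X ∪ π₂*Y where π_i*X = {π_i* x : x ∈ X} ∪ {0}. Then (S, Σ, {0,π₁}, {0,π₂}) is a CQP monoid but not a CP monoid: Σ(π₁,π₂) ≠ {0,1}. -/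
open scoped Pointwise

/-- Generators of the branch monoid `B`: π₁, π₂, their stars, and 0. -/
inductive Bgen : Type
  | pi : Fin 2 → Bgen
  | pis : Fin 2 → Bgen
  | zero : Bgen

/-- Defining relations of the branch monoid: `0·b = b·0 = 0` and `πᵢπⱼ* = δᵢⱼ`. -/
inductive Brel : FreeMonoid Bgen → FreeMonoid Bgen → Prop
  | zero_mul (x : FreeMonoid Bgen) :
      Brel (FreeMonoid.of Bgen.zero * x) (FreeMonoid.of Bgen.zero)
  | mul_zero (x : FreeMonoid Bgen) :
      Brel (x * FreeMonoid.of Bgen.zero) (FreeMonoid.of Bgen.zero)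
  | pi_pis_same (i : Fin 2) :
      Brel (FreeMonoid.of (Bgen.pi i) * FreeMonoid.of (Bgen.pis i)) 1
  | pi_pis_ne (i j : Fin 2) : i ≠ j →
      Brel (FreeMonoid.of (Bgen.pi i) * FreeMonoid.of (Bgen.pis j))
        (FreeMonoid.of Bgen.zero)

/-- The congruence generated by the defining relations. -/
def Bcon : Con (FreeMonoid Bgen) := conGen Brel

/-- The branch monoid `B`. -/
abbrev Bmon : Type := Bcon.Quotient

/-- The absorbing element `0` of `B`. -/
def bz : Bmon := Bcon.mk' (FreeMonoid.of Bgen.zero)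

/-- The image of πᵢ in `B`. -/
def bpi (i : Fin 2) : Bmon := Bcon.mk' (FreeMonoid.of (Bgen.pi i))

/-- The image of πᵢ* in `B`. -/
def bpis (i : Fin 2) : Bmon := Bcon.mk' (FreeMonoid.of (Bgen.pis i))

/-- The inclusion of the free monoid `F` on π₁, π₂ into `B`. -/
def ιF : FreeMonoid (Fin 2) →* Bmon :=
  Bcon.mk'.comp (FreeMonoid.map Bgen.pi)

/-- The star `w*` of a word `w ∈ F`, as an element of `B`: reverse the word and
star each letter. -/
def bstar (w : FreeMonoid (Fin 2)) : Bmon :=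
  Bcon.mk' (FreeMonoid.ofList (((FreeMonoid.toList w).reverse).map Bgen.pis))

theorem bz_mul (x : Bmon) : bz * x = bz := by
  induction x using Con.induction_on with
  | H x => exact Con.eq Bcon |>.2 (ConGen.Rel.of _ _ (Brel.zero_mul x))

theorem mul_bz (x : Bmon) : x * bz = bz := by
  induction x using Con.induction_on with
  | H x => exact Con.eq Bcon |>.2 (ConGen.Rel.of _ _ (Brel.mul_zero x))

/-- The monoid `S` of subsets of `B` containing `0`, under elementwise
multiplication; the identity is `{0, 1}`. -/
def Smon : Type := {X : Set Bmon // bz ∈ X}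

noncomputable instance : Monoid Smon where
  mul X Y := ⟨X.val * Y.val, ⟨bz, X.prop, bz, Y.prop, bz_mul bz⟩⟩
  one := ⟨{bz, 1}, Or.inl rfl⟩
  mul_assoc X Y Z := Subtype.ext (mul_assoc X.val Y.val Z.val)
  one_mul X := Subtype.ext <| by
    show ({bz, 1} : Set Bmon) * X.val = X.val
    rw [Set.insert_eq, Set.union_mul, Set.singleton_mul, Set.singleton_mul]
    ext b
    constructor
    · rintro (⟨x, hx, rfl⟩ | ⟨x, hx, rfl⟩)
      · simpa [bz_mul] using X.prop
      · simpa [one_mul] using hx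
    · intro hb
      exact Or.inr ⟨b, hb, one_mul b⟩
  mul_one X := Subtype.ext <| by
    show X.val * ({bz, 1} : Set Bmon) = X.val
    rw [Set.insert_eq, Set.mul_union, Set.mul_singleton, Set.mul_singleton]
    ext b
    constructor
    · rintro (⟨x, hx, rfl⟩ | ⟨x, hx, rfl⟩)
      · simpa [mul_bz] using X.prop
      · simpa [mul_one] using hx
    · intro hb
      exact Or.inr ⟨b, hb, mul_one b⟩

theorem Smon_mul_val (X Y : Smon) : (X * Y).val = X.val * Y.val := rfl

theorem Smon_one_val : (1 : Smon).val = {bz, 1} := rfl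

/-- The element `{0, πᵢ}` of `S`. -/
def sπ (i : Fin 2) : Smon := ⟨{bz, bpi i}, Or.inl rfl⟩

/-- The element `{0, πᵢ*}` of `S`. -/
def sπs (i : Fin 2) : Smon := ⟨{bz, bpis i}, Or.inl rfl⟩

/-- The CQP operation on `S`: `Σ(X, Y) = π₁* X ∪ π₂* Y`. -/
def SgS (X Y : Smon) : Smon :=
  ⟨({bz, bpis 0} : Set Bmon) * X.val ∪ ({bz, bpis 1} : Set Bmon) * Y.val,
    Or.inl ⟨bz, Or.inl rfl, bz, X.prop, bz_mul bz⟩⟩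

/-!
For `X ∋ 0` the product `{0, b} X` is just `b X`, so `{0, πᵢ} Σ(X, Y) = (πᵢπ₁*) X ∪ (πᵢπ₂*) Y`,
and `πᵢπⱼ* = δᵢⱼ` gives the projection laws, while `Σ(X, Y) Z = Σ(XZ, YZ)` is associativity
of the pointwise product.
`Σ({0, π₁}, {0, π₂})` contains `π₁*π₁`, which is neither `0` nor `1`: in the representation of
`B` by partial maps on binary words, `π₁*π₁` fixes a word starting with the first letter and is
undefined on one starting with the second.
-/

theorem bpi_mul_bpis_self (i : Fin 2) : bpi i * bpis i = 1 :=
  (Con.eq Bcon).2 (ConGen.Rel.of _ _ (Brel.pi_pis_same i))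

theorem bpi_mul_bpis_of_ne {i j : Fin 2} (h : i ≠ j) : bpi i * bpis j = bz :=
  (Con.eq Bcon).2 (ConGen.Rel.of _ _ (Brel.pi_pis_ne i j h))

/-- `πᵢ*` prepends the letter `i` and `πᵢ` strips it, failing (`none`, the image of `0`) on any
other word. -/
def wordRep : Bgen → Function.End (Option (List (Fin 2)))
  | .pi i => fun w => w.bind fun
      | j :: t => if j = i then some t else none
      | [] => none
  | .pis i => Option.map (i :: ·)
  | .zero => fun _ => none

theorem lift_wordRep_mul_apply (x y : FreeMonoid Bgen) (w : Option (List (Fin 2))) :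
    FreeMonoid.lift wordRep (x * y) w =
      FreeMonoid.lift wordRep x (FreeMonoid.lift wordRep y w) := by
  rw [map_mul]; rfl

theorem lift_wordRep_none (x : FreeMonoid Bgen) : FreeMonoid.lift wordRep x none = none := by
  induction x using FreeMonoid.inductionOn' with
  | one => rfl
  | of_mul g x ih =>
    rw [lift_wordRep_mul_apply, ih, FreeMonoid.lift_eval_of]
    cases g <;> rfl

theorem Bcon_le_ker_lift_wordRep : Bcon ≤ Con.ker (FreeMonoid.lift wordRep) := by
  refine Con.conGen_le.2 fun x y h => funext fun w => ?_
  cases h with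
  | zero_mul x => rw [lift_wordRep_mul_apply, FreeMonoid.lift_eval_of]; rfl
  | mul_zero x => rw [lift_wordRep_mul_apply, FreeMonoid.lift_eval_of]; exact lift_wordRep_none x
  | pi_pis_same i =>
    rw [lift_wordRep_mul_apply, FreeMonoid.lift_eval_of, FreeMonoid.lift_eval_of]
    cases w <;> simp [wordRep] <;> rfl
  | pi_pis_ne i j hij =>
    rw [lift_wordRep_mul_apply, FreeMonoid.lift_eval_of, FreeMonoid.lift_eval_of]
    cases w <;> simp [wordRep, Ne.symm hij]

def wordAction : Bmon →* Function.End (Option (List (Fin 2))) :=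
  Bcon.lift _ Bcon_le_ker_lift_wordRep

theorem wordAction_bpis_mul_bpi_apply :
    wordAction (bpis 0 * bpi 0) (some [0]) = some [0] ∧
      wordAction (bpis 0 * bpi 0) (some [1]) = none :=
  ⟨rfl, rfl⟩

theorem bpis_mul_bpi_ne_bz : bpis 0 * bpi 0 ≠ bz := fun h => by
  have h0 := wordAction_bpis_mul_bpi_apply.1
  rw [h] at h0
  cases h0

theorem bpis_mul_bpi_ne_one : bpis 0 * bpi 0 ≠ 1 := fun h => by
  have h1 := wordAction_bpis_mul_bpi_apply.2
  rw [h] at h1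
  cases h1

section Absorbing

variable {M : Type*} [Monoid M] {z : M}

theorem absorbing_smul_set (hz : ∀ x, z * x = z) {X : Set M} (hX : X.Nonempty) :
    z • X = {z} := by
  simp only [← Set.image_smul, smul_eq_mul, hz, hX.image_const]

theorem pair_mul_eq_smul_set (hz : ∀ x, z * x = z) {b : M} (hb : b * z = z) {X : Set M}
    (hX : z ∈ X) : ({z, b} : Set M) * X = b • X := by
  rw [Set.insert_eq, Set.union_mul]
  change ({z} : Set M) • X ∪ ({b} : Set M) • X = b • X
  rw [Set.singleton_smul, Set.singleton_smul, absorbing_smul_set hz ⟨z, hX⟩, Set.singleton_union,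
    Set.insert_eq_of_mem (Set.mem_smul_set.2 ⟨z, hX, hb⟩)]

end Absorbing

theorem Smon_pair_mul_val (b : Bmon) (X : Smon) : ({bz, b} : Set Bmon) * X.val = b • X.val :=
  pair_mul_eq_smul_set bz_mul (mul_bz b) X.prop

theorem SgS_val (X Y : Smon) : (SgS X Y).val = bpis 0 • X.val ∪ bpis 1 • Y.val :=
  congrArg₂ (· ∪ ·) (Smon_pair_mul_val _ X) (Smon_pair_mul_val _ Y)

theorem sπ_mul_val (i : Fin 2) (X : Smon) : (sπ i * X).val = bpi i • X.val :=
  Smon_pair_mul_val (bpi i) X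

theorem sπ_mul_SgS_val (i : Fin 2) (X Y : Smon) :
    (sπ i * SgS X Y).val = (bpi i * bpis 0) • X.val ∪ (bpi i * bpis 1) • Y.val := by
  rw [sπ_mul_val, SgS_val, Set.smul_set_union, smul_smul, smul_smul]

theorem sπ_zero_mul_SgS (X Y : Smon) : sπ 0 * SgS X Y = X := Subtype.ext <| by
  rw [sπ_mul_SgS_val, bpi_mul_bpis_self, bpi_mul_bpis_of_ne (by decide), one_smul,
    absorbing_smul_set bz_mul ⟨bz, Y.prop⟩, Set.union_singleton, Set.insert_eq_of_mem X.prop]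

theorem sπ_one_mul_SgS (X Y : Smon) : sπ 1 * SgS X Y = Y := Subtype.ext <| by
  rw [sπ_mul_SgS_val, bpi_mul_bpis_self, bpi_mul_bpis_of_ne (by decide), one_smul,
    absorbing_smul_set bz_mul ⟨bz, X.prop⟩, Set.singleton_union, Set.insert_eq_of_mem Y.prop]

theorem SgS_mul (X Y Z : Smon) : SgS X Y * Z = SgS (X * Z) (Y * Z) := Subtype.ext <| by
  simp only [Smon_mul_val, SgS_val, Set.union_mul, smul_mul_assoc]

theorem SgS_sπ_ne_one : SgS (sπ 0) (sπ 1) ≠ 1 := by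
  intro h
  have hmem : bpis 0 * bpi 0 ∈ (SgS (sπ 0) (sπ 1)).val :=
    Or.inl ⟨bpis 0, Or.inr rfl, bpi 0, Or.inr rfl, rfl⟩
  rw [h, Smon_one_val] at hmem
  rcases hmem with hbz | hone
  · exact bpis_mul_bpi_ne_bz hbz
  · exact bpis_mul_bpi_ne_one hone

/-- `(S, Σ, {0,π₁}, {0,π₂})` is a CQP monoid but not a CP monoid:
`Σ(π₁,π₂) ≠ {0,1}`. -/
theorem smon_cqp_not_cp :
    IsCQP SgS (sπ 0) (sπ 1) ∧ SgS (sπ 0) (sπ 1) ≠ 1 :=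
  ⟨⟨sπ_zero_mul_SgS, sπ_one_mul_SgS, fun X Y Z => (SgS_mul X Y Z).symm⟩, SgS_sπ_ne_one⟩
end

section
/- For A ∈ T, the non-zero elements of β(A) ∈ S are exactly the elements w₁* w₂ where, ranging over the leaves of A, w₁ (read right to left) describes the path from the root of A to that leaf and w₂ is the color of the leaf; in particular the number of non-zero elements of β(A) equals the number of leaves of A. -/
open scoped Pointwise

/-- The free magma `T` on the free monoid `F` on π₁, π₂: finite nonempty ordered
binary trees with leaves colored by elements of `F`. -/
inductive Tm : Type
  | leaf : FreeMonoid (Fin 2) → Tm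
  | node : Tm → Tm → Tm

/-- The action of the generator πᵢ on `T`: it picks out the `i`-th subtree of a
node, and acts by left multiplication on (the color of) a single leaf. -/
def pact (i : Fin 2) : Tm → Tm
  | .leaf w => .leaf (FreeMonoid.of i * w)
  | .node A B => if i = 0 then A else B

/-- The left action of a word `w ∈ F` on `T`, applying the symbols of `w` one at
a time from right to left. -/
def wact (w : FreeMonoid (Fin 2)) (A : Tm) : Tm :=
  (FreeMonoid.toList w).foldr pact A

/-- The product on `T`: `A * B` replaces each leaf of `A` of color `w` by `w • B`. -/
def tmul : Tm → Tm → Tm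
  | .leaf w, B => wact w B
  | .node A₁ A₂, B => .node (tmul A₁ B) (tmul A₂ B)

/-- The identity of `T`: a single leaf colored by the empty word. -/
def tone : Tm := .leaf 1

/-- The list of leaves of a tree `A ∈ T`, in order, recorded as pairs
`(path, color)`: the path from the root to the leaf is described by the word
`path` read from right to left, and `color` is the color of the leaf. -/
def tleaves : Tm → List (FreeMonoid (Fin 2) × FreeMonoid (Fin 2))
  | .leaf w => [(1, w)]
  | .node A B =>
      ((tleaves A).map fun pc => (pc.1 * FreeMonoid.of 0, pc.2)) ++
        ((tleaves B).map fun pc => (pc.1 * FreeMonoid.of 1, pc.2))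

/-- The branch homomorphism `β : T → S`: the magma homomorphism sending a leaf
of color `w` to `{0, w}`. -/
noncomputable def βmap : Tm → Smon
  | .leaf w => ⟨{bz, ιF w}, Or.inl rfl⟩
  | .node A B => SgS (βmap A) (βmap B)

/-!
By induction on the tree, `Σ` prefixes `πᵢ*` to every branch of the `i`-th subtree, so
`β(A) = {0} ∪ {w₁* w₂ | (w₁, w₂) a leaf of A}`. To count, one needs the `w₁* w₂` to be
non-zero and pairwise distinct in `B`: `B` acts on reduced words `(reverse p)* q` (with
`πᵢ` cancelling a leading `πᵢ*` and killing a leading `πⱼ*`, `j ≠ i`), and `w₁* w₂` sends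
the empty word to `(reverse w₁, w₂)`, while `0` kills everything. The leaves themselves have
distinct paths, since the last letter of a path records the subtree it enters first.
-/

/-- Reduced words: `some (p, q)` stands for `(reverse p)* q` and `none` for `0`. -/
abbrev ReducedWord : Type := Option (List (Fin 2) × List (Fin 2))

def genAct : Bgen → ReducedWord → ReducedWord
  | .zero => fun _ => none
  | .pis i => Option.map fun pq => (i :: pq.1, pq.2)
  | .pi i => fun
    | some ([], q) => some ([], i :: q)
    | some (j :: p, q) => if i = j then some (p, q) else none
    | none => none

def freeAct : FreeMonoid Bgen →* Function.End ReducedWord :=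
  FreeMonoid.lift fun g => (genAct g : Function.End ReducedWord)

theorem freeAct_mul_apply (x y : FreeMonoid Bgen) (r : ReducedWord) :
    freeAct (x * y) r = freeAct x (freeAct y r) := by
  rw [map_mul]; rfl

theorem freeAct_of_apply (g : Bgen) (r : ReducedWord) :
    freeAct (FreeMonoid.of g) r = genAct g r :=
  congrFun (FreeMonoid.lift_eval_of (M := Function.End ReducedWord) genAct g) r

theorem freeAct_apply_none (x : FreeMonoid Bgen) : freeAct x none = none := by
  induction x using FreeMonoid.inductionOn' with
  | one => rfl
  | of_mul g x ih => rw [freeAct_mul_apply, ih, freeAct_of_apply]; cases g <;> rfl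

theorem freeAct_respects_Brel {x y : FreeMonoid Bgen} (h : Brel x y) :
    freeAct x = freeAct y := by
  funext r
  cases h with
  | zero_mul _ => simp only [freeAct_mul_apply, freeAct_of_apply, genAct]
  | mul_zero _ => simp only [freeAct_mul_apply, freeAct_of_apply, genAct, freeAct_apply_none]
  | pi_pis_same i =>
    rw [freeAct_mul_apply, freeAct_of_apply, freeAct_of_apply, map_one]
    rcases r with _ | ⟨p, q⟩
    · rfl
    · simp only [genAct, Option.map_some]; rfl
  | pi_pis_ne i j hij =>
    simp only [freeAct_mul_apply, freeAct_of_apply]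
    rcases r with _ | ⟨p, q⟩ <;> simp [genAct, hij]

def bAct : Bmon →* Function.End ReducedWord :=
  Bcon.lift freeAct (Con.conGen_le.2 fun _ _ h => freeAct_respects_Brel h)

theorem bAct_mk' (x : FreeMonoid Bgen) : bAct (Bcon.mk' x) = freeAct x := rfl

theorem bAct_mul_apply (a b : Bmon) (r : ReducedWord) :
    bAct (a * b) r = bAct a (bAct b r) := by
  rw [map_mul]; rfl

theorem bAct_bz (r : ReducedWord) : bAct bz r = none := rfl

theorem bAct_ιF (w : FreeMonoid (Fin 2)) (q : List (Fin 2)) :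
    bAct (ιF w) (some ([], q)) = some ([], FreeMonoid.toList w ++ q) := by
  induction w using FreeMonoid.inductionOn' generalizing q with
  | one => rfl
  | of_mul i w ih => rw [map_mul, bAct_mul_apply, ih]; rfl

theorem bAct_bstar (w : FreeMonoid (Fin 2)) (p q : List (Fin 2)) :
    bAct (bstar w) (some (p, q)) = some ((FreeMonoid.toList w).reverse ++ p, q) := by
  rw [bstar, bAct_mk']
  induction (FreeMonoid.toList w).reverse generalizing p with
  | nil => rfl
  | cons i l ih =>
    rw [List.map_cons, FreeMonoid.ofList_cons, freeAct_mul_apply, ih, freeAct_of_apply]; rfl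

theorem bAct_bstar_mul_ιF (w v : FreeMonoid (Fin 2)) :
    bAct (bstar w * ιF v) (some ([], [])) =
      some ((FreeMonoid.toList w).reverse, FreeMonoid.toList v) := by
  rw [bAct_mul_apply, bAct_ιF, bAct_bstar, List.append_nil, List.append_nil]

theorem bstar_mul_ιF_ne_bz (w v : FreeMonoid (Fin 2)) : bstar w * ιF v ≠ bz := by
  intro h
  have := bAct_bstar_mul_ιF w v
  rw [h, bAct_bz] at this
  cases this

theorem bstar_mul_ιF_injective :
    Function.Injective fun wv : FreeMonoid (Fin 2) × FreeMonoid (Fin 2) =>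
      bstar wv.1 * ιF wv.2 := by
  rintro ⟨w, v⟩ ⟨w', v'⟩ h
  have := congrArg (bAct · (some ([], []))) h
  simp only [bAct_bstar_mul_ιF, Option.some.injEq, Prod.mk.injEq, List.reverse_inj] at this
  exact Prod.ext (FreeMonoid.toList.injective this.1) (FreeMonoid.toList.injective this.2)

theorem pair_mul_insert_of_absorbing {M : Type*} [Monoid M] {z : M} (hzl : ∀ x, z * x = z)
    (hzr : ∀ x, x * z = z) (s : M) (X : Set M) :
    ({z, s} : Set M) * insert z X = insert z (s • X) := by
  ext b
  simp only [Set.mem_mul, Set.mem_insert_iff, Set.mem_singleton_iff, Set.mem_smul_set, smul_eq_mul]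
  constructor
  · rintro ⟨a, ha | ha, c, hc | hc, rfl⟩
    · exact .inl (by rw [ha, hzl])
    · exact .inl (by rw [ha, hzl])
    · exact .inl (by rw [hc, hzr])
    · exact .inr ⟨c, hc, by rw [ha]⟩
  · rintro (hb | ⟨c, hc, rfl⟩)
    · exact ⟨z, .inl rfl, z, .inl rfl, by rw [hb, hzl]⟩
    · exact ⟨s, .inr rfl, c, .inr hc, rfl⟩

theorem bstar_mul_of (w : FreeMonoid (Fin 2)) (i : Fin 2) :
    bstar (w * FreeMonoid.of i) = bpis i * bstar w := by
  simp only [bstar, FreeMonoid.toList_mul, FreeMonoid.toList_of, List.reverse_append,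
    List.reverse_singleton, List.singleton_append, List.map_cons, FreeMonoid.ofList_cons, map_mul]
  rfl

def branchSet (l : List (FreeMonoid (Fin 2) × FreeMonoid (Fin 2))) : Set Bmon :=
  {b | ∃ pc ∈ l, b = bstar pc.1 * ιF pc.2}

theorem branchSet_append (l l' : List (FreeMonoid (Fin 2) × FreeMonoid (Fin 2))) :
    branchSet (l ++ l') = branchSet l ∪ branchSet l' := by
  ext b
  simp only [branchSet, List.mem_append, Set.mem_ofPred_eq, Set.mem_union, or_and_right, exists_or]

theorem branchSet_map_extend (l : List (FreeMonoid (Fin 2) × FreeMonoid (Fin 2))) (i : Fin 2) :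
    branchSet (l.map fun pc => (pc.1 * FreeMonoid.of i, pc.2)) = bpis i • branchSet l := by
  ext b
  simp only [branchSet, List.mem_map, Set.mem_ofPred_eq, Set.mem_smul_set, smul_eq_mul]
  constructor
  · rintro ⟨_, ⟨pc, hpc, rfl⟩, rfl⟩
    exact ⟨_, ⟨pc, hpc, rfl⟩, by rw [bstar_mul_of, mul_assoc]⟩
  · rintro ⟨_, ⟨pc, hpc, rfl⟩, rfl⟩
    exact ⟨_, ⟨pc, hpc, rfl⟩, by rw [bstar_mul_of, mul_assoc]⟩

theorem βmap_val (A : Tm) : (βmap A).val = insert bz (branchSet (tleaves A)) := by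
  induction A with
  | leaf w => ext b; simp [βmap, tleaves, branchSet, bstar]
  | node A B ihA ihB =>
    show ({bz, bpis 0} : Set Bmon) * (βmap A).val ∪ ({bz, bpis 1} : Set Bmon) * (βmap B).val = _
    rw [ihA, ihB, pair_mul_insert_of_absorbing bz_mul mul_bz,
      pair_mul_insert_of_absorbing bz_mul mul_bz, tleaves, branchSet_append,
      branchSet_map_extend, branchSet_map_extend, Set.insert_union_distrib]

theorem bz_notMem_branchSet (l : List (FreeMonoid (Fin 2) × FreeMonoid (Fin 2))) :
    bz ∉ branchSet l := by
  rintro ⟨pc, -, h⟩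
  exact bstar_mul_ιF_ne_bz pc.1 pc.2 h.symm

theorem ncard_branchSet {l : List (FreeMonoid (Fin 2) × FreeMonoid (Fin 2))} (hl : l.Nodup) :
    (branchSet l).ncard = l.length := by
  classical
  have : branchSet l =
      (fun pc : FreeMonoid (Fin 2) × FreeMonoid (Fin 2) => bstar pc.1 * ιF pc.2) ''
        l.toFinset := by
    ext b; simp [branchSet, eq_comm]
  rw [this, Set.ncard_image_of_injective _ bstar_mul_ιF_injective, Set.ncard_coe_finset,
    List.toFinset_card_of_nodup hl]

theorem FreeMonoid.mul_of_ne_mul_of {α : Type*} {i j : α} (hij : i ≠ j) (x y : FreeMonoid α) :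
    x * FreeMonoid.of i ≠ y * FreeMonoid.of j := by
  intro h
  simpa [hij] using congrArg (fun w => (FreeMonoid.toList w).getLast?) h

theorem tleaves_nodup (A : Tm) : (tleaves A).Nodup := by
  induction A with
  | leaf _ => exact List.nodup_singleton _
  | node A B ihA ihB =>
    have extend_injective (i : Fin 2) :
        Function.Injective fun pc : FreeMonoid (Fin 2) × FreeMonoid (Fin 2) =>
          (pc.1 * FreeMonoid.of i, pc.2) :=
      (mul_left_injective _).prodMap Function.injective_id
    refine (ihA.map (extend_injective 0)).append (ihB.map (extend_injective 1)) ?_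
    simp only [List.disjoint_left, List.mem_map]
    rintro _ ⟨x, -, rfl⟩ ⟨y, -, hy⟩
    exact FreeMonoid.mul_of_ne_mul_of (by decide) _ _ (congrArg Prod.fst hy).symm

/-- For `A ∈ T`, the non-zero elements of `β(A)` are exactly the elements
`w₁* w₂` where `(w₁, w₂)` ranges over the (paths, colors) of the leaves of `A`;
in particular, the number of non-zero elements of `β(A)` is the number of
leaves of `A`. -/
theorem βmap_branches (A : Tm) :
    ((βmap A).val \ {bz} = {b | ∃ pc ∈ tleaves A, b = bstar pc.1 * ιF pc.2}) ∧
      Set.ncard ((βmap A).val \ {bz}) = (tleaves A).length := by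
  have hnonzero : (βmap A).val \ {bz} = branchSet (tleaves A) := by
    rw [βmap_val, Set.insert_sdiff_self_of_notMem (bz_notMem_branchSet _)]
  exact ⟨hnonzero, hnonzero ▸ ncard_branchSet (tleaves_nodup A)⟩
end

section
/- Every element A of T is equivalent under the relation ≡ to a unique reduced element r(A), and r(A) can be obtained from A by a sequence of retraction moves alone. -/
/-- One expansion move on `T`: some leaf of color `w` is replaced by the
two-leaf tree with colors `π₁ w`, `π₂ w` in order. -/
inductive Exp : Tm → Tm → Prop
  | expand (w : FreeMonoid (Fin 2)) :
      Exp (.leaf w) (.node (.leaf (FreeMonoid.of 0 * w)) (.leaf (FreeMonoid.of 1 * w)))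
  | left {A A' : Tm} (B : Tm) : Exp A A' → Exp (.node A B) (.node A' B)
  | right (A : Tm) {B B' : Tm} : Exp B B' → Exp (.node A B) (.node A B')

/-- The equivalence relation `≡` on `T` generated by expansion moves. -/
def TEquiv : Tm → Tm → Prop := Relation.EqvGen Exp

/-- `A` is reduced if no retraction move applies to it, i.e. it is not the
result of an expansion move. -/
def TReduced (A : Tm) : Prop := ∀ B : Tm, ¬ Exp B A

/-!
Reduce a tree bottom-up, merging a node's two reduced children into the leaf `w` whenever they
are leaves colored `π₁ w`, `π₂ w`. The result is reduced and is reached from `A` by retractions.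
An expansion move does not change it, because the new pair is merged straight back (`π₁ w`
determines `w`), so it is constant on `≡`-classes; and it fixes reduced trees, whence uniqueness.
-/

open FreeMonoid

namespace Tm

open Classical in
noncomputable def retractNode (A B : Tm) : Tm :=
  if h : ∃ w, A = leaf (of 0 * w) ∧ B = leaf (of 1 * w) then leaf h.choose else node A B

lemma retractNode_expand (w : FreeMonoid (Fin 2)) :
    retractNode (leaf (of 0 * w)) (leaf (of 1 * w)) = leaf w := by
  have h : ∃ v, leaf (of 0 * w) = leaf (of 0 * v) ∧ leaf (of 1 * w) = leaf (of 1 * v) :=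
    ⟨w, rfl, rfl⟩
  obtain ⟨hv, -⟩ := h.choose_spec
  rw [retractNode, dif_pos h, ← mul_left_cancel (leaf.inj hv)]

lemma retractNode_of_not_exists {A B : Tm} (h : ¬∃ w, A = leaf (of 0 * w) ∧ B = leaf (of 1 * w)) :
    retractNode A B = node A B := by
  rw [retractNode, dif_neg h]

noncomputable def reduce : Tm → Tm
  | leaf w => leaf w
  | node A B => retractNode (reduce A) (reduce B)

end Tm

open Tm

lemma treduced_leaf (w : FreeMonoid (Fin 2)) : TReduced (leaf w) := by
  rintro B ⟨⟩

lemma treduced_node_iff {A B : Tm} :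
    TReduced (node A B) ↔
      TReduced A ∧ TReduced B ∧ ¬∃ w, A = leaf (of 0 * w) ∧ B = leaf (of 1 * w) := by
  refine ⟨fun h => ⟨fun C hC => h _ (.left B hC), fun C hC => h _ (.right A hC), ?_⟩, ?_⟩
  · rintro ⟨w, rfl, rfl⟩
    exact h _ (.expand w)
  · rintro ⟨hA, hB, hAB⟩ C (_ | ⟨_, hC⟩ | ⟨_, hC⟩)
    exacts [hAB ⟨_, rfl, rfl⟩, hA _ hC, hB _ hC]

lemma treduced_reduce (A : Tm) : TReduced (reduce A) := by
  induction A with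
  | leaf w => exact treduced_leaf w
  | node A B ihA ihB =>
    by_cases h : ∃ w, reduce A = leaf (of 0 * w) ∧ reduce B = leaf (of 1 * w)
    · obtain ⟨w, hA, hB⟩ := h
      rw [reduce, hA, hB, retractNode_expand]
      exact treduced_leaf w
    · rw [reduce, retractNode_of_not_exists h]
      exact treduced_node_iff.2 ⟨ihA, ihB, h⟩

lemma retracts_to_reduce (A : Tm) :
    Relation.ReflTransGen (fun X Y => Exp Y X) A (reduce A) := by
  induction A with
  | leaf w => exact .refl
  | node A B ihA ihB =>
    have hchildren : Relation.ReflTransGen (fun X Y => Exp Y X) (node A B)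
        (node (reduce A) (reduce B)) :=
      (ihA.lift (node · B) fun _ _ => .left B).trans
        (ihB.lift (node (reduce A)) fun _ _ => .right (reduce A))
    by_cases h : ∃ w, reduce A = leaf (of 0 * w) ∧ reduce B = leaf (of 1 * w)
    · obtain ⟨w, hA, hB⟩ := h
      rw [hA, hB] at hchildren
      rw [reduce, hA, hB, retractNode_expand]
      exact hchildren.tail (.expand w)
    · rw [reduce, retractNode_of_not_exists h]
      exact hchildren

lemma reduce_eq_self_of_treduced {A : Tm} (h : TReduced A) : reduce A = A := by
  induction A with
  | leaf w => rfl
  | node A B ihA ihB =>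
    obtain ⟨hA, hB, hAB⟩ := treduced_node_iff.1 h
    rw [reduce, ihA hA, ihB hB, retractNode_of_not_exists hAB]

lemma reduce_eq_of_exp {A B : Tm} (h : Exp A B) : reduce A = reduce B := by
  induction h with
  | expand w => exact (retractNode_expand w).symm
  | left B _ ih => rw [reduce, reduce, ih]
  | right A _ ih => rw [reduce, reduce, ih]

lemma reduce_eq_of_tequiv {A B : Tm} (h : TEquiv A B) : reduce A = reduce B := by
  induction h with
  | rel _ _ h => exact reduce_eq_of_exp h
  | refl => rfl
  | symm _ _ _ ih => exact ih.symm
  | trans _ _ _ _ _ ih₁ ih₂ => exact ih₁.trans ih₂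

/-- Every `A ∈ T` is `≡`-equivalent to a unique reduced element `R`, and `R`
may be obtained from `A` through a chain of retraction moves alone. -/
theorem texists_unique_reduced (A : Tm) :
    ∃ R : Tm, TReduced R ∧ Relation.ReflTransGen (fun X Y => Exp Y X) A R ∧
      ∀ R' : Tm, TReduced R' → TEquiv A R' → R' = R := by
  refine ⟨reduce A, treduced_reduce A, retracts_to_reduce A, fun R' hR' hAR' => ?_⟩
  rw [reduce_eq_of_tequiv hAR', reduce_eq_self_of_treduced hR']
end

section
/- Let G be a free monoid on at least one generator and w₁, …, w_n ∈ G. The following are equivalent: (1) the family is left cofinite (all but finitely many y ∈ G can be written y = x w_i for some x ∈ G and some i) and left independent (no w_i equals x w_j with i ≠ j); (2) the family is minimally left cofinite (left cofinite but no proper subfamily is); (3) the family is maximally left independent (left independent but every extension by one element is left dependent). -/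
/-!
Two words with a common left multiple are suffix-comparable, and a word has only finitely many
suffixes. If the family is cofinite, some left multiple `x * g` of an arbitrary word `g` is a
left multiple of a member `w`, so `g` and `w` are comparable: adjoining `g`, or keeping a member
whose erasure leaves the family cofinite, creates a dependence. Conversely, if the family is
independent but becomes dependent when any word `y` is adjoined, then every `y` not covered by
the family is a suffix of a member, and there are finitely many such `y`.
-/

/-- A family of elements of a free monoid is left cofinite if all but finitely
many elements are left multiples of some member of the family. -/
def LeftCofinite {α : Type*} (l : List (FreeMonoid α)) : Prop :=
  {y : FreeMonoid α | ¬ ∃ x w, w ∈ l ∧ y = x * w}.Finite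

/-- A family is left dependent if some member is a left multiple of a different
member. -/
def LeftDependent {α : Type*} (l : List (FreeMonoid α)) : Prop :=
  ∃ (i j : Fin l.length) (x : FreeMonoid α), i ≠ j ∧ l.get i = x * l.get j

theorem Set.Finite.exists_mul_notMem {M : Type*} [Monoid M] [IsRightCancelMul M] [Infinite M]
    {S : Set M} (hS : S.Finite) (w : M) : ∃ x, x * w ∉ S :=
  (hS.preimage (mul_left_injective w).injOn).exists_notMem

namespace FreeMonoid

variable {α : Type*}

theorem exists_mul_eq_iff_suffix {y w : FreeMonoid α} :
    (∃ x, y = x * w) ↔ w.toList <:+ y.toList := by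
  constructor
  · rintro ⟨x, rfl⟩
    exact ⟨x.toList, (toList_mul x w).symm⟩
  · rintro ⟨t, ht⟩
    exact ⟨ofList t, toList.injective (by rw [toList_mul, toList_ofList, ht])⟩

theorem exists_eq_mul_or_eq_mul_of_mul_eq_mul {x₁ x₂ w₁ w₂ : FreeMonoid α}
    (h : x₁ * w₁ = x₂ * w₂) : ∃ z, w₁ = z * w₂ ∨ w₂ = z * w₁ := by
  have hw₁ : w₁.toList <:+ (x₁ * w₁).toList := exists_mul_eq_iff_suffix.mp ⟨x₁, rfl⟩
  have hw₂ : w₂.toList <:+ (x₁ * w₁).toList := exists_mul_eq_iff_suffix.mp ⟨x₂, h⟩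
  rcases List.suffix_or_suffix_of_suffix hw₁ hw₂ with h₁₂ | h₂₁
  · obtain ⟨z, hz⟩ := exists_mul_eq_iff_suffix.mpr h₁₂
    exact ⟨z, Or.inr hz⟩
  · obtain ⟨z, hz⟩ := exists_mul_eq_iff_suffix.mpr h₂₁
    exact ⟨z, Or.inl hz⟩

theorem finite_setOf_exists_mul_eq (w : FreeMonoid α) : {y | ∃ x, w = x * y}.Finite := by
  refine ((w.toList.tails.finite_toSet).preimage toList.injective.injOn).subset ?_
  intro y hy
  simpa [List.mem_tails, exists_mul_eq_iff_suffix] using hy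

end FreeMonoid

section Families

variable {α : Type*} {l : List (FreeMonoid α)}

theorem leftDependent_cons_iff {g : FreeMonoid α} :
    LeftDependent (g :: l) ↔ LeftDependent l ∨ ∃ w ∈ l, ∃ x, g = x * w ∨ w = x * g := by
  constructor
  · rintro ⟨i, j, x, hij, h⟩
    induction i using Fin.cases <;> induction j using Fin.cases
    · exact absurd rfl hij
    · exact Or.inr ⟨_, List.get_mem _ _, x, Or.inl h⟩
    · exact Or.inr ⟨_, List.get_mem _ _, x, Or.inr h⟩
    · exact Or.inl ⟨_, _, x, fun hij' => hij (congrArg Fin.succ hij'), h⟩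
  · rintro (⟨i, j, x, hij, h⟩ | ⟨w, hw, x, h | h⟩)
    · exact ⟨i.succ, j.succ, x, (Fin.succ_injective _).ne hij, h⟩
    all_goals obtain ⟨k, rfl⟩ := List.get_of_mem hw
    · exact ⟨0, k.succ, x, (Fin.succ_ne_zero k).symm, h⟩
    · exact ⟨k.succ, 0, x, Fin.succ_ne_zero k, h⟩

theorem LeftCofinite.exists_eq_mul_or_eq_mul [Nonempty α] (hl : LeftCofinite l)
    (g : FreeMonoid α) : ∃ w ∈ l, ∃ z, g = z * w ∨ w = z * g := by
  obtain ⟨x, hx⟩ := Set.Finite.exists_mul_notMem hl g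
  obtain ⟨x', w, hw, h⟩ := not_not.mp hx
  exact ⟨w, hw, FreeMonoid.exists_eq_mul_or_eq_mul_of_mul_eq_mul h⟩

theorem LeftDependent.cons_of_leftCofinite [Nonempty α] (hl : LeftCofinite l)
    (g : FreeMonoid α) : LeftDependent (g :: l) :=
  leftDependent_cons_iff.mpr (Or.inr (hl.exists_eq_mul_or_eq_mul g))

theorem LeftCofinite.eraseIdx (hl : LeftCofinite l) {i j : Fin l.length} (hij : i ≠ j)
    {x : FreeMonoid α} (h : l.get i = x * l.get j) : LeftCofinite (l.eraseIdx i) := by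
  refine hl.subset fun y hy ⟨x', w, hw, hyw⟩ => hy ?_
  obtain ⟨k, rfl⟩ := List.get_of_mem hw
  by_cases hki : k = i
  · subst hki
    exact ⟨x' * x, l.get j, List.mem_eraseIdx_iff_getElem.mpr
        ⟨j, j.isLt, fun h => hij (Fin.ext h.symm), rfl⟩, by rw [hyw, h, mul_assoc]⟩
  · exact ⟨x', l.get k, List.mem_eraseIdx_iff_getElem.mpr
      ⟨k, k.isLt, fun h => hki (Fin.ext h), rfl⟩, hyw⟩

theorem LeftDependent.of_leftCofinite_eraseIdx [Nonempty α] (i : Fin l.length)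
    (h : LeftCofinite (l.eraseIdx i)) : LeftDependent l := by
  obtain ⟨w, hw, z, hz⟩ := h.exists_eq_mul_or_eq_mul (l.get i)
  obtain ⟨k, hk, hki, rfl⟩ := List.mem_eraseIdx_iff_getElem.mp hw
  have hne : (⟨k, hk⟩ : Fin l.length) ≠ i := fun h => hki (congrArg Fin.val h)
  rcases hz with hz | hz
  · exact ⟨i, ⟨k, hk⟩, z, hne.symm, hz⟩
  · exact ⟨⟨k, hk⟩, i, z, hne, hz⟩

theorem LeftCofinite.of_forall_leftDependent_cons (hl : ¬ LeftDependent l)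
    (h : ∀ g, LeftDependent (g :: l)) : LeftCofinite l := by
  refine (l.finite_toSet.biUnion fun w _ => FreeMonoid.finite_setOf_exists_mul_eq w).subset ?_
  intro y hy
  obtain ⟨w, hw, x, hyw | hwy⟩ := (leftDependent_cons_iff.mp (h y)).resolve_left hl
  · exact absurd ⟨x, w, hw, hyw⟩ hy
  · exact Set.mem_biUnion hw ⟨x, hwy⟩

end Families

/-- For a finite family `w₁, …, wₙ` in a free monoid on at least one generator,
the following are equivalent: (1) the family is left cofinite and left
independent; (2) it is minimally left cofinite; (3) it is maximally left
independent. -/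
theorem leftCofinite_independent_tfae {α : Type*} [Nonempty α]
    (l : List (FreeMonoid α)) :
    ((LeftCofinite l ∧ ¬ LeftDependent l) ↔
      (LeftCofinite l ∧ ∀ i : Fin l.length, ¬ LeftCofinite (l.eraseIdx i))) ∧
    ((LeftCofinite l ∧ ¬ LeftDependent l) ↔
      (¬ LeftDependent l ∧ ∀ g : FreeMonoid α, LeftDependent (g :: l))) := by
  constructor
  · constructor
    · rintro ⟨hcof, hind⟩
      exact ⟨hcof, fun i hi => hind (.of_leftCofinite_eraseIdx i hi)⟩
    · rintro ⟨hcof, hmin⟩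
      exact ⟨hcof, fun ⟨i, _, _, hij, h⟩ => hmin i (hcof.eraseIdx hij h)⟩
  · constructor
    · rintro ⟨hcof, hind⟩
      exact ⟨hind, .cons_of_leftCofinite hcof⟩
    · rintro ⟨hind, hmax⟩
      exact ⟨.of_forall_leftDependent_cons hind hmax, hind⟩
end
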